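/- Let G be a finite simple block graph and let P_1,…,P_ℓ be vertex-disjoint induced paths of G. If P_ind contains an internal fork or a double fork as a subgraph, then P_ind contains an internal strand, an internal fork, or a double fork that is edge-disjoint from P̲ = P_1 ∪ … ∪ P_ℓ. -/

import Mathlib

open SimpleGraph

/-- An induced path in a simple graph `G`: a walk which is a path and such that the
subgraph of `G` induced on its vertex set equals the path. -/
structure InducedPath {V : Type*} (G : SimpleGraph V) where
  first : V
  last : V
  walk : G.Walk first last
  isPath : walk.IsPath
  induced : ∀ x ∈ walk.support, ∀ y ∈ walk.support, G.Adj x y → s(x, y) ∈ walk.edges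

namespace InducedPath

variable {V : Type*} {G : SimpleGraph V}

/-- The vertex set of an induced path. -/
def vertexSet (P : InducedPath G) : Set V := {v | v ∈ P.walk.support}

/-- The edge set of an induced path. -/
def edgeSet (P : InducedPath G) : Set (Sym2 V) := {e | e ∈ P.walk.edges}

/-- The terminal vertices `∂P` of an induced path. -/
def boundary (P : InducedPath G) : Set V := {P.first, P.last}

/-- The internal vertices `P°` of an induced path. -/
def interior (P : InducedPath G) : Set V := P.vertexSet \ P.boundary

end InducedPath

section FamilyDefs

variable {V : Type*} (G : SimpleGraph V) {ℓ : ℕ}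

/-- `Q` contains `P` as a subgraph. -/
def PathContains (Q P : InducedPath G) : Prop :=
  P.vertexSet ⊆ Q.vertexSet ∧ P.edgeSet ⊆ Q.edgeSet

/-- The vertex set of `P_ind`, the induced subgraph on `⋃ i, V(P i)`. -/
def famVerts (P : Fin ℓ → InducedPath G) : Set V := ⋃ i, (P i).vertexSet

/-- The union of the edge sets of the paths `P i`. -/
def famEdges (P : Fin ℓ → InducedPath G) : Set (Sym2 V) := ⋃ i, (P i).edgeSet

/-- The paths `P i` are pairwise vertex-disjoint. -/
def PairwiseVertexDisjoint (P : Fin ℓ → InducedPath G) : Prop :=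
  ∀ i j : Fin ℓ, i ≠ j → Disjoint (P i).vertexSet (P j).vertexSet

/-- `φ` is an orientation of the induced path `P`, i.e. a surjection `{1,2} → ∂P`. -/
def IsOrientation (P : InducedPath G) (φ : Fin 2 → V) : Prop :=
  Set.range φ = P.boundary

/-- `Q` is an induced path of `P_ind` (equivalently, an induced path of `G` all of whose
vertices belong to `⋃ i, V(P i)`). -/
def IsPathOfInd (P : Fin ℓ → InducedPath G) (Q : InducedPath G) : Prop :=
  Q.vertexSet ⊆ famVerts G P

/-- The data `(P, σ, φ)` is DOIP. -/
def IsDOIPData (P : Fin ℓ → InducedPath G) (σ : Equiv.Perm (Fin ℓ))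
    (φ : Fin ℓ → Fin 2 → V) : Prop :=
  (∀ i, IsOrientation G (P i) (φ i)) ∧
    ∀ i j : Fin ℓ, σ i ≤ σ j → ∀ Q : InducedPath G, IsPathOfInd G P Q →
      ({Q.first, Q.last} : Set V) = {φ (σ i) 0, φ (σ j) 1} →
      ∃ k, PathContains G Q (P k)

/-- The family `P` is DOIP: there exist `σ` and orientations making it DOIP. -/
def FamilyDOIP (P : Fin ℓ → InducedPath G) : Prop :=
  ∃ (σ : Equiv.Perm (Fin ℓ)) (φ : Fin ℓ → Fin 2 → V), IsDOIPData G P σ φ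

/-- `Q` realizes an arc `(i,j)` of the directed multigraph `K_{P_ind}`. -/
def KArcWitness (P : Fin ℓ → InducedPath G) (φ : Fin ℓ → Fin 2 → V) (i j : Fin ℓ)
    (Q : InducedPath G) : Prop :=
  IsPathOfInd G P Q ∧ ({Q.first, Q.last} : Set V) = {φ i 0, φ j 1} ∧
    ∀ k, ¬ PathContains G Q (P k)

/-- `(i,j)` is an arc of `K_{P_ind}`. -/
def KArc (P : Fin ℓ → InducedPath G) (φ : Fin ℓ → Fin 2 → V) (i j : Fin ℓ) : Prop :=
  ∃ Q : InducedPath G, KArcWitness G P φ i j Q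

/-- The directed multigraph `K_{P_ind}` is directed acyclic (no loops and no directed
cycles). -/
def KAcyclic (P : Fin ℓ → InducedPath G) (φ : Fin ℓ → Fin 2 → V) : Prop :=
  ∀ i : Fin ℓ, ¬ Relation.TransGen (KArc G P φ) i i

/-- `Q` is a strand of `P_ind` from `P i` to `P j`. -/
def IsStrand (P : Fin ℓ → InducedPath G) (φ : Fin ℓ → Fin 2 → V) (i j : Fin ℓ)
    (Q : InducedPath G) : Prop :=
  i ≠ j ∧ IsPathOfInd G P Q ∧ Q.first ≠ φ i 1 ∧ Q.last ≠ φ j 0 ∧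
    Q.vertexSet ∩ (P i).vertexSet = {Q.first} ∧
    Q.vertexSet ∩ (P j).vertexSet = {Q.last} ∧
    ∀ k, ¬ PathContains G Q (P k)

/-- `Q` is an internal strand of `P_ind` from `P i` to `P j`. -/
def IsInternalStrand (P : Fin ℓ → InducedPath G) (i j : Fin ℓ) (Q : InducedPath G) : Prop :=
  i ≠ j ∧ IsPathOfInd G P Q ∧
    Q.first ∈ (P i).interior ∧ Q.last ∈ (P j).interior ∧
    Q.vertexSet ∩ (P i).vertexSet = {Q.first} ∧
    Q.vertexSet ∩ (P j).vertexSet = {Q.last} ∧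
    ∀ k, ¬ PathContains G Q (P k)

/-- `(Q, b, c)` is an internal fork of `P_ind` from `P i` to `P j`. -/
def IsInternalFork (P : Fin ℓ → InducedPath G) (i j : Fin ℓ) (Q : InducedPath G)
    (b c : V) : Prop :=
  i ≠ j ∧ IsPathOfInd G P Q ∧ Q.first ∈ (P i).interior ∧
    Q.vertexSet ∩ (P i).vertexSet = {Q.first} ∧
    Q.vertexSet ∩ (P j).vertexSet = ∅ ∧
    b ∈ (P j).vertexSet ∧ c ∈ (P j).vertexSet ∧ b ≠ c ∧
    G.Adj Q.last b ∧ G.Adj Q.last c ∧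
    ∀ k, ¬ PathContains G Q (P k)

/-- `(Q, a, b, c, d)` is a double fork of `P_ind` from `P i` to `P j`. -/
def IsDoubleFork (P : Fin ℓ → InducedPath G) (i j : Fin ℓ) (Q : InducedPath G)
    (a b c d : V) : Prop :=
  i ≠ j ∧ IsPathOfInd G P Q ∧
    Q.vertexSet ∩ (P i).vertexSet = ∅ ∧
    Q.vertexSet ∩ (P j).vertexSet = ∅ ∧
    a ∈ (P i).vertexSet ∧ b ∈ (P i).vertexSet ∧ a ≠ b ∧
    c ∈ (P j).vertexSet ∧ d ∈ (P j).vertexSet ∧ c ≠ d ∧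
    G.Adj Q.first a ∧ G.Adj Q.first b ∧ G.Adj Q.last c ∧ G.Adj Q.last d ∧
    ∀ k, ¬ PathContains G Q (P k)

/-- `(a, b, c, d)` is a complete ladder of `P_ind` between `P i` and `P j`. -/
def IsCompleteLadder (P : Fin ℓ → InducedPath G) (i j : Fin ℓ) (a b c d : V) : Prop :=
  i ≠ j ∧ a ∈ (P i).vertexSet ∧ b ∈ (P i).vertexSet ∧ a ≠ b ∧
    c ∈ (P j).vertexSet ∧ d ∈ (P j).vertexSet ∧ c ≠ d ∧
    G.Adj a b ∧ G.Adj a c ∧ G.Adj a d ∧ G.Adj b c ∧ G.Adj b d ∧ G.Adj c d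

/-- `P_ind` contains an internal strand, an internal fork, a double fork, or a
complete ladder. -/
def HasForbidden (P : Fin ℓ → InducedPath G) : Prop :=
  (∃ i j Q, IsInternalStrand G P i j Q) ∨
  (∃ i j Q b c, IsInternalFork G P i j Q b c) ∨
  (∃ i j Q a b c d, IsDoubleFork G P i j Q a b c d) ∨
  (∃ i j a b c d, IsCompleteLadder G P i j a b c d)

/-- `P_ind` contains a complete ladder, or an internal strand, internal fork, or double
fork which is edge-disjoint from the family `P`. -/
def HasForbiddenEdgeDisjoint (P : Fin ℓ → InducedPath G) : Prop :=
  (∃ i j Q, IsInternalStrand G P i j Q ∧ Disjoint Q.edgeSet (famEdges G P)) ∨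
  (∃ i j Q b c, IsInternalFork G P i j Q b c ∧
    Disjoint (Q.edgeSet ∪ {s(Q.last, b), s(Q.last, c)}) (famEdges G P)) ∨
  (∃ i j Q a b c d, IsDoubleFork G P i j Q a b c d ∧
    Disjoint (Q.edgeSet ∪ {s(Q.first, a), s(Q.first, b), s(Q.last, c), s(Q.last, d)})
      (famEdges G P)) ∨
  (∃ i j a b c d, IsCompleteLadder G P i j a b c d)

end FamilyDefs

section Invariants

variable {V : Type*}

/-- The invariant `ν(G)`: the maximal total number of edges of a family of
vertex-disjoint induced paths of `G` which is DOIP. -/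
noncomputable def nu (G : SimpleGraph V) : ℕ :=
  sSup {n : ℕ | ∃ (ℓ : ℕ) (P : Fin ℓ → InducedPath G),
    PairwiseVertexDisjoint G P ∧ FamilyDOIP G P ∧ n = ∑ i, (P i).walk.length}

/-- `ℓ(G)`: the number of edges of a longest induced path of `G`. -/
noncomputable def longestInducedPathLength (G : SimpleGraph V) : ℕ :=
  sSup {n : ℕ | ∃ P : InducedPath G, n = P.walk.length}

end Invariants

section BlockGraphs

variable {V : Type*} {G : SimpleGraph V}

/-- A subgraph is biconnected if it is connected and remains connected after
deleting any single vertex. -/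
def SubgraphBiconnected (H : G.Subgraph) : Prop :=
  H.coe.Connected ∧ ∀ v : V, ((H.deleteVerts {v}).coe).Connected

/-- A block of `G` is a maximal biconnected subgraph. -/
def IsBlock (H : G.Subgraph) : Prop :=
  SubgraphBiconnected H ∧ ∀ H' : G.Subgraph, SubgraphBiconnected H' → H ≤ H' → H' = H

/-- `G` is a block graph if every block of `G` is a complete graph. -/
def IsBlockGraph (G : SimpleGraph V) : Prop :=
  ∀ H : G.Subgraph, IsBlock H → ∀ a ∈ H.verts, ∀ b ∈ H.verts, a ≠ b → H.Adj a b

/-- The intersection `Q ∩ R` of two induced paths, as a subgraph of `G`. -/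
def pathsInter (Q R : InducedPath G) : G.Subgraph where
  verts := Q.vertexSet ∩ R.vertexSet
  Adj a b := G.Adj a b ∧ s(a, b) ∈ Q.walk.edges ∧ s(a, b) ∈ R.walk.edges
  adj_sub h := h.1
  edge_vert h := ⟨Q.walk.fst_mem_support_of_mem_edges h.2.1,
    R.walk.fst_mem_support_of_mem_edges h.2.2⟩
  symm := by
    constructor
    intro a b h
    refine ⟨h.1.symm, ?_, ?_⟩
    · rw [Sym2.eq_swap]; exact h.2.1
    · rw [Sym2.eq_swap]; exact h.2.2

/-- `s` is a maximal clique of `G`. -/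
def IsMaxClique (G : SimpleGraph V) (s : Set V) : Prop :=
  G.IsClique s ∧ ∀ t : Set V, G.IsClique t → s ⊆ t → s = t

/-- `G` has the two-block property: every vertex belongs to at most two maximal
cliques. -/
def TwoBlockProperty (G : SimpleGraph V) : Prop :=
  ∀ v : V, ({s : Set V | IsMaxClique G s ∧ v ∈ s}).ncard ≤ 2

/-- The completion `G_c` of `G` at the vertex `c`. -/
def completionAt (G : SimpleGraph V) (c : V) : SimpleGraph V where
  Adj u w := G.Adj u w ∨ (u ≠ w ∧ G.Adj c u ∧ G.Adj c w)
  symm := by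
    constructor
    intro u w h
    rcases h with h | ⟨hne, h1, h2⟩
    · exact Or.inl h.symm
    · exact Or.inr ⟨hne.symm, h2, h1⟩
  loopless := by
    constructor
    intro u h
    rcases h with h | ⟨hne, _, _⟩
    · exact G.irrefl h
    · exact hne rfl

/-- The number of connected components of a graph. -/
noncomputable def numComponents (G : SimpleGraph V) : ℕ :=
  Nat.card G.ConnectedComponent

/-- `c` is a cut vertex of `G`: deleting it strictly increases the number of
connected components. -/
def IsCutVertex (G : SimpleGraph V) (c : V) : Prop :=
  numComponents G < numComponents (G.induce ({c}ᶜ : Set V))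

end BlockGraphs

/-!
Call an internal strand, an internal fork, a double fork or a reversed internal fork a *link*.
If a link `Q` shares an edge with some `P k`, let `u` and `u'` be the first and the last vertex
of `Q` on `P k`. If `u` is internal to `P k`, the part of `Q` up to `u` is a link with fewer
vertices; symmetrically for `u'`. Otherwise `Q` runs through both ends of `P k`. In a block
graph every cycle spans a clique, so an induced path is determined by its ends, and `Q` would
contain `P k`, which a link cannot. Hence a link with the fewest vertices shares no edge with
the family, and the extra edges of a fork join two different paths of the family.
-/

namespace SimpleGraph.Walk

variable {V : Type*} {G : SimpleGraph V}

def IsInduced {u v : V} (p : G.Walk u v) : Prop :=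
  ∀ x ∈ p.support, ∀ y ∈ p.support, G.Adj x y → s(x, y) ∈ p.edges

theorem IsInduced.reverse {u v : V} {p : G.Walk u v} (hp : p.IsInduced) :
    p.reverse.IsInduced := by
  intro x hx y hy hxy
  rw [support_reverse, List.mem_reverse] at hx hy
  rw [edges_reverse, List.mem_reverse]
  exact hp x hx y hy hxy

theorem IsInduced.of_isSubwalk {u v u' v' : V} {p : G.Walk u v} {q : G.Walk u' v'}
    (hq : q.IsPath) (hqi : q.IsInduced) (hpq : p.IsSubwalk q) : p.IsInduced := by
  obtain ⟨r, r', rfl⟩ := hpq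
  have hl : (r.append p).IsPath := hq.of_append_left
  -- an edge of `q` with both ends on `p` cannot lie in `r` or `r'`, which meet `p` in one vertex
  have hr : ∀ x ∈ r.support, x ∈ p.support → x = u := fun x hx hx' => by
    by_contra hne; exact hl.ne_of_mem_support_of_append hne hx hx' rfl
  have hr' : ∀ x ∈ p.support, x ∈ r'.support → x = v := fun x hx hx' => by
    by_contra hne
    exact hq.ne_of_mem_support_of_append hne
      ((mem_support_append_iff _ _).mpr (Or.inr hx)) hx' rfl
  intro x hx y hy hxy
  have hmem := hqi x (by simp [hx]) y (by simp [hy]) hxy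
  simp only [edges_append, List.mem_append] at hmem
  rcases hmem with (hmem | hmem) | hmem
  · exact absurd ((hr x (r.fst_mem_support_of_mem_edges hmem) hx).trans
      (hr y (r.snd_mem_support_of_mem_edges hmem) hy).symm) hxy.ne
  · exact hmem
  · exact absurd ((hr' x hx (r'.fst_mem_support_of_mem_edges hmem)).trans
      (hr' y hy (r'.snd_mem_support_of_mem_edges hmem)).symm) hxy.ne

theorem exists_isSubwalk_of_mem_support {u v a b : V} (p : G.Walk u v) (ha : a ∈ p.support)
    (hb : b ∈ p.support) :
    (∃ q : G.Walk a b, q.IsSubwalk p) ∨ ∃ q : G.Walk b a, q.IsSubwalk p := by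
  classical
  rw [← p.take_spec ha, mem_support_append_iff] at hb
  rcases hb with hb | hb
  · exact Or.inr ⟨_, ((p.takeUntil a ha).isSubwalk_dropUntil hb).trans (p.isSubwalk_takeUntil ha)⟩
  · exact Or.inl ⟨_, ((p.dropUntil a ha).isSubwalk_takeUntil hb).trans (p.isSubwalk_dropUntil ha)⟩

theorem exists_split_at_first_mem {S : Set V} {u v : V} (p : G.Walk u v)
    (h : ∃ x ∈ p.support, x ∈ S) :
    ∃ w ∈ S, ∃ (p₁ : G.Walk u w) (p₂ : G.Walk w v),
      p = p₁.append p₂ ∧ ∀ x ∈ p₁.support, x ∈ S → x = w := by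
  induction p with
  | nil =>
    obtain ⟨x, hx, hxS⟩ := h
    rw [support_nil, List.mem_singleton] at hx
    subst hx
    exact ⟨x, hxS, nil, nil, rfl, by simp⟩
  | @cons u' _ _ hadj p ih =>
    by_cases huS : u' ∈ S
    · exact ⟨u', huS, nil, cons hadj p, rfl, by simp⟩
    · obtain ⟨x, hx, hxS⟩ := h
      have hx' : x ∈ p.support := by
        rw [support_cons, List.mem_cons] at hx
        exact hx.resolve_left (by rintro rfl; exact huS hxS)
      obtain ⟨w, hwS, p₁, p₂, rfl, hp₁⟩ := ih ⟨x, hx', hxS⟩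
      refine ⟨w, hwS, cons hadj p₁, p₂, rfl, fun y hy hyS => ?_⟩
      rw [support_cons, List.mem_cons] at hy
      exact hy.elim (fun h => absurd (h ▸ hyS) huS) (hp₁ y · hyS)

theorem exists_split_at_last_mem {S : Set V} {u v : V} (p : G.Walk u v)
    (h : ∃ x ∈ p.support, x ∈ S) :
    ∃ w ∈ S, ∃ (p₁ : G.Walk u w) (p₂ : G.Walk w v),
      p = p₁.append p₂ ∧ ∀ x ∈ p₂.support, x ∈ S → x = w := by
  obtain ⟨x, hx, hxS⟩ := h
  obtain ⟨w, hwS, p₁, p₂, hrev, hp₁⟩ :=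
    p.reverse.exists_split_at_first_mem ⟨x, by simpa using hx, hxS⟩
  refine ⟨w, hwS, p₂.reverse, p₁.reverse, ?_, fun y hy => hp₁ y (by simpa using hy)⟩
  rw [← reverse_append, ← hrev, reverse_reverse]

theorem IsPath.exists_split_at_first_last_mem {S : Set V} {u v x y : V} {p : G.Walk u v}
    (hp : p.IsPath) (hx : x ∈ p.support) (hy : y ∈ p.support) (hxS : x ∈ S) (hyS : y ∈ S)
    (hxy : x ≠ y) :
    ∃ w ∈ S, ∃ w' ∈ S, w ≠ w' ∧ ∃ (p₁ : G.Walk u w) (p₂ : G.Walk w w') (p₃ : G.Walk w' v),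
      p = p₁.append (p₂.append p₃) ∧ (∀ z ∈ p₁.support, z ∈ S → z = w) ∧
        ∀ z ∈ p₃.support, z ∈ S → z = w' := by
  obtain ⟨w, hwS, p₁, q, rfl, hp₁⟩ := p.exists_split_at_first_mem ⟨x, hx, hxS⟩
  obtain ⟨w', hw'S, p₂, p₃, rfl, hp₃⟩ :=
    q.exists_split_at_last_mem ⟨w, q.start_mem_support, hwS⟩
  refine ⟨w, hwS, w', hw'S, ?_, p₁, p₂, p₃, rfl, hp₁, hp₃⟩
  rintro rfl
  -- otherwise `p₂` is a closed path, hence trivial, and `p` meets `S` only at `w`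
  have hnil : p₂ = Walk.nil := (isPath_iff_nil.mp hp.of_append_right.of_append_left).eq_nil
  subst hnil
  have honly : ∀ z ∈ (p₁.append (Walk.nil.append p₃)).support, z ∈ S → z = w := by
    intro z hz hzS
    simp only [nil_append, mem_support_append_iff] at hz
    exact hz.elim (hp₁ z · hzS) (hp₃ z · hzS)
  exact hxy ((honly x hx hxS).trans (honly y hy hyS).symm)

theorem IsCycle.connected_deleteVerts_start {v : V} {c : G.Walk v v} (hc : c.IsCycle) :
    (c.toSubgraph.deleteVerts {v}).Connected := by
  have hlen := hc.three_le_length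
  have htail : ¬ c.tail.Nil := by rw [← length_eq_zero_iff, length_tail]; omega
  -- `c` with its base vertex removed is traced by the path `c.tail.dropLast`
  have hsupp : ∀ w, w ∈ c.tail.dropLast.support ↔ w ∈ c.support ∧ w ≠ v := by
    intro w
    have hnd := hc.isPath_tail.support_nodup
    rw [← cons_support_tail hc.not_nil, ← support_dropLast_concat htail]
    rw [← support_dropLast_concat htail, List.nodup_append] at hnd
    simp only [List.mem_cons, List.mem_append]
    constructor
    · intro hw
      exact ⟨Or.inr (Or.inl hw), fun h => hnd.2.2 w hw v (by simp) h⟩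
    · rintro ⟨h, hne⟩
      simpa [hne] using h
  refine c.tail.dropLast.toSubgraph_connected.mono' (fun a b hab => ?_) ?_
  · rw [adj_toSubgraph_iff_mem_edges] at hab
    have hsub : c.tail.dropLast.edges ⊆ c.edges := by
      rw [edges_dropLast, edges_tail]
      exact List.Subset.trans (List.dropLast_subset _) (List.tail_subset _)
    have ha := (hsupp a).mp (c.tail.dropLast.fst_mem_support_of_mem_edges hab)
    have hb := (hsupp b).mp (c.tail.dropLast.snd_mem_support_of_mem_edges hab)
    exact Subgraph.deleteVerts_adj.mpr ⟨c.mem_verts_toSubgraph.mpr ha.1, ha.2,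
      c.mem_verts_toSubgraph.mpr hb.1, hb.2, adj_toSubgraph_iff_mem_edges.mpr (hsub hab)⟩
  · ext w
    simp [hsupp]

theorem IsCycle.subgraphBiconnected {v : V} {c : G.Walk v v} (hc : c.IsCycle) :
    SubgraphBiconnected c.toSubgraph := by
  classical
  refine ⟨c.toSubgraph_connected.coe, fun w => ?_⟩
  by_cases hw : w ∈ c.support
  · rw [← c.toSubgraph_rotate hw]
    exact (hc.rotate hw).connected_deleteVerts_start.coe
  · rw [← Subgraph.deleteVerts_inter_verts_left_eq,
      Set.inter_singleton_eq_empty.mpr (by rwa [mem_verts_toSubgraph]),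
      Subgraph.deleteVerts_empty]
    exact c.toSubgraph_connected.coe

end SimpleGraph.Walk

open SimpleGraph.Walk

section BlockGraph

variable {V : Type*} [Finite V] {G : SimpleGraph V}

theorem IsBlockGraph.adj_of_subgraphBiconnected (hG : IsBlockGraph G) {H : G.Subgraph}
    (hH : SubgraphBiconnected H) {a b : V} (ha : a ∈ H.verts) (hb : b ∈ H.verts) (hab : a ≠ b) :
    G.Adj a b := by
  obtain ⟨M, hHM, hM⟩ := Finite.exists_le_maximal hH
  have hblock : IsBlock M := ⟨hM.1, fun H' hH' hle => le_antisymm (hM.2 hH' hle) hle⟩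
  exact M.adj_sub (hG M hblock a (hHM.1 ha) b (hHM.1 hb) hab)

theorem IsBlockGraph.adj_of_isCycle (hG : IsBlockGraph G) {v : V} {c : G.Walk v v}
    (hc : c.IsCycle) {a b : V} (ha : a ∈ c.support) (hb : b ∈ c.support) (hab : a ≠ b) :
    G.Adj a b :=
  hG.adj_of_subgraphBiconnected hc.subgraphBiconnected (c.mem_verts_toSubgraph.mpr ha)
    (c.mem_verts_toSubgraph.mpr hb) hab

theorem IsBlockGraph.eq_of_isInduced (hG : IsBlockGraph G) {u v : V} {p q : G.Walk u v}
    (hp : p.IsPath) (hq : q.IsPath) (hpi : p.IsInduced) (hqi : q.IsInduced) : p = q := by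
  by_contra hne
  obtain ⟨a, b, p', q', hp', hq', hc⟩ := hp.exists_isCycle_of_ne hq hne
  have hlen : 3 ≤ p'.length + q'.length := by simpa using hc.three_le_length
  have hp'path := isPath_of_isSubwalk hp' hp
  have hq'path := isPath_of_isSubwalk hq' hq
  have hab : a ≠ b := by
    rintro rfl
    have h1 := length_eq_zero_iff.mpr (isPath_iff_nil.mp hp'path)
    have h2 := length_eq_zero_iff.mpr (isPath_iff_nil.mp hq'path)
    omega
  -- the cycle is a clique, so each induced half is the single edge `ab`
  have hadj : G.Adj a b := hG.adj_of_isCycle hc (p'.append q'.reverse).start_mem_support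
    ((mem_support_append_iff _ _).mpr (Or.inl p'.end_mem_support)) hab
  have h1 := hp'path.length_eq_one_of_mem_edges ((hpi.of_isSubwalk hp hp') a
    p'.start_mem_support b p'.end_mem_support hadj)
  have h2 := hq'path.length_eq_one_of_mem_edges ((hqi.of_isSubwalk hq hq') a
    q'.start_mem_support b q'.end_mem_support hadj)
  omega

end BlockGraph

namespace InducedPath

variable {V : Type*} {G : SimpleGraph V}

theorem first_mem (Q : InducedPath G) : Q.first ∈ Q.vertexSet := Q.walk.start_mem_support

theorem last_mem (Q : InducedPath G) : Q.last ∈ Q.vertexSet := Q.walk.end_mem_support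

protected def reverse (Q : InducedPath G) : InducedPath G where
  first := Q.last
  last := Q.first
  walk := Q.walk.reverse
  isPath := Q.isPath.reverse
  induced := IsInduced.reverse Q.induced

@[simp]
theorem first_reverse (Q : InducedPath G) : Q.reverse.first = Q.last := rfl

@[simp]
theorem last_reverse (Q : InducedPath G) : Q.reverse.last = Q.first := rfl

@[simp]
theorem vertexSet_reverse (Q : InducedPath G) : Q.reverse.vertexSet = Q.vertexSet := by
  ext; simp [vertexSet, InducedPath.reverse]

@[simp]
theorem edgeSet_reverse (Q : InducedPath G) : Q.reverse.edgeSet = Q.edgeSet := by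
  ext; simp [edgeSet, InducedPath.reverse]

def ofIsSubwalk (Q : InducedPath G) {a b : V} (p : G.Walk a b) (hp : p.IsSubwalk Q.walk) :
    InducedPath G where
  first := a
  last := b
  walk := p
  isPath := isPath_of_isSubwalk hp Q.isPath
  induced := IsInduced.of_isSubwalk Q.isPath Q.induced hp

theorem exists_prefix_suffix (Q : InducedPath G) {S : Set V} {x y : V}
    (hx : x ∈ Q.vertexSet ∩ S) (hy : y ∈ Q.vertexSet ∩ S) (hxy : x ≠ y) :
    ∃ Q₁ Q₂ : InducedPath G, Q₁.first = Q.first ∧ Q₂.last = Q.last ∧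
      Q₁.vertexSet ⊆ Q.vertexSet ∧ Q₂.vertexSet ⊆ Q.vertexSet ∧
      Q₁.vertexSet ∩ S = {Q₁.last} ∧ Q₂.vertexSet ∩ S = {Q₂.first} ∧ Q₁.last ≠ Q₂.first := by
  obtain ⟨w, hwS, w', hw'S, hne, p₁, p₂, p₃, heq, hp₁, hp₃⟩ :=
    Q.isPath.exists_split_at_first_last_mem hx.1 hy.1 hx.2 hy.2 hxy
  have h₁ : p₁.IsSubwalk Q.walk := isSubwalk_of_append_left heq
  have h₃ : p₃.IsSubwalk Q.walk :=
    (isSubwalk_of_append_right rfl).trans (isSubwalk_of_append_right heq)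
  refine ⟨Q.ofIsSubwalk p₁ h₁, Q.ofIsSubwalk p₃ h₃, rfl, rfl, fun z hz => h₁.support_subset hz,
    fun z hz => h₃.support_subset hz, ?_, ?_, hne⟩
  · exact Set.eq_singleton_iff_unique_mem.mpr
      ⟨⟨p₁.end_mem_support, hwS⟩, fun z hz => hp₁ z hz.1 hz.2⟩
  · exact Set.eq_singleton_iff_unique_mem.mpr
      ⟨⟨p₃.start_mem_support, hw'S⟩, fun z hz => hp₃ z hz.1 hz.2⟩

end InducedPath

theorem pathContains_of_vertexSet_subset {V : Type*} {G : SimpleGraph V} {Q R : InducedPath G}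
    (h : R.vertexSet ⊆ Q.vertexSet) : PathContains G Q R := by
  refine ⟨h, fun e he => ?_⟩
  induction e using Sym2.ind with
  | _ x y =>
    exact Q.induced x (h (R.walk.fst_mem_support_of_mem_edges he)) y
      (h (R.walk.snd_mem_support_of_mem_edges he)) (R.walk.adj_of_mem_edges he)

theorem IsBlockGraph.pathContains {V : Type*} [Finite V] {G : SimpleGraph V}
    (hG : IsBlockGraph G) {Q R : InducedPath G} (hf : R.first ∈ Q.vertexSet)
    (hl : R.last ∈ Q.vertexSet) : PathContains G Q R := by
  refine pathContains_of_vertexSet_subset fun z hz => ?_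
  rcases Q.walk.exists_isSubwalk_of_mem_support hf hl with ⟨p, hp⟩ | ⟨p, hp⟩
  · have hR := hG.eq_of_isInduced R.isPath (isPath_of_isSubwalk hp Q.isPath) R.induced
      (IsInduced.of_isSubwalk Q.isPath Q.induced hp)
    exact hp.support_subset (hR ▸ hz)
  · have hR := hG.eq_of_isInduced R.isPath.reverse (isPath_of_isSubwalk hp Q.isPath)
      (IsInduced.reverse R.induced) (IsInduced.of_isSubwalk Q.isPath Q.induced hp)
    exact hp.support_subset (by rw [← hR, support_reverse, List.mem_reverse]; exact hz)

section Links

variable {V : Type*} {G : SimpleGraph V} {ℓ : ℕ} {P : Fin ℓ → InducedPath G}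
  {Q Q' R : InducedPath G} {v : V}

/-- The end `v` of `Q` meets `R` as an end of an internal strand or of an internal fork. -/
def AttachesAt (R Q : InducedPath G) (v : V) : Prop :=
  (v ∈ R.interior ∧ Q.vertexSet ∩ R.vertexSet = {v}) ∨
    (Q.vertexSet ∩ R.vertexSet = ∅ ∧
      ∃ b c, b ∈ R.vertexSet ∧ c ∈ R.vertexSet ∧ b ≠ c ∧ G.Adj v b ∧ G.Adj v c)

/-- Internal strands, internal forks, double forks, and reversed internal forks. -/
def IsLink (P : Fin ℓ → InducedPath G) (Q : InducedPath G) : Prop :=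
  ∃ i j, i ≠ j ∧ IsPathOfInd G P Q ∧ AttachesAt (P i) Q Q.first ∧ AttachesAt (P j) Q Q.last ∧
    ∀ k, ¬ PathContains G Q (P k)

theorem AttachesAt.subsingleton (h : AttachesAt R Q v) :
    (Q.vertexSet ∩ R.vertexSet).Subsingleton := by
  rcases h with ⟨-, h⟩ | ⟨h, -⟩ <;> rw [h]
  exacts [Set.subsingleton_singleton, Set.subsingleton_empty]

theorem AttachesAt.mono (h : AttachesAt R Q v) (hsub : Q'.vertexSet ⊆ Q.vertexSet)
    (hv : v ∈ Q'.vertexSet) : AttachesAt R Q' v := by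
  have hmono : Q'.vertexSet ∩ R.vertexSet ⊆ Q.vertexSet ∩ R.vertexSet :=
    Set.inter_subset_inter_left _ hsub
  rcases h with ⟨hvR, h⟩ | ⟨h, hfork⟩
  · exact Or.inl ⟨hvR, Set.Subset.antisymm (h ▸ hmono)
      (Set.singleton_subset_iff.mpr ⟨hv, hvR.1⟩)⟩
  · exact Or.inr ⟨Set.subset_eq_empty (h ▸ hmono) rfl, hfork⟩

@[simp]
theorem isPathOfInd_reverse : IsPathOfInd G P Q.reverse ↔ IsPathOfInd G P Q := by
  simp [IsPathOfInd]

@[simp]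
theorem pathContains_reverse : PathContains G Q.reverse R ↔ PathContains G Q R := by
  simp [PathContains]

@[simp]
theorem attachesAt_reverse : AttachesAt R Q.reverse v ↔ AttachesAt R Q v := by
  simp [AttachesAt]

theorem IsInternalFork.isLink {i j : Fin ℓ} {b c : V} (h : IsInternalFork G P i j Q b c) :
    IsLink P Q :=
  let ⟨hij, hind, hfirst, hQi, hQj, hb, hc, hbc, hvb, hvc, hnc⟩ := h
  ⟨i, j, hij, hind, Or.inl ⟨hfirst, hQi⟩, Or.inr ⟨hQj, b, c, hb, hc, hbc, hvb, hvc⟩, hnc⟩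

theorem IsDoubleFork.isLink {i j : Fin ℓ} {a b c d : V}
    (h : IsDoubleFork G P i j Q a b c d) : IsLink P Q :=
  let ⟨hij, hind, hQi, hQj, ha, hb, hab, hc, hd, hcd, hva, hvb, hvc, hvd, hnc⟩ := h
  ⟨i, j, hij, hind, Or.inr ⟨hQi, a, b, ha, hb, hab, hva, hvb⟩,
    Or.inr ⟨hQj, c, d, hc, hd, hcd, hvc, hvd⟩, hnc⟩

theorem IsLink.not_pathContains (h : IsLink P Q) (k : Fin ℓ) : ¬ PathContains G Q (P k) :=
  let ⟨_, _, _, _, _, _, hnc⟩ := h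
  hnc k

theorem IsLink.reverse (h : IsLink P Q) : IsLink P Q.reverse := by
  obtain ⟨i, j, hij, hind, hi, hj, hnc⟩ := h
  refine ⟨j, i, hij.symm, isPathOfInd_reverse.mpr hind, attachesAt_reverse.mpr hj,
    attachesAt_reverse.mpr hi, ?_⟩
  simpa using hnc

theorem IsLink.prefix (hQ : IsLink P Q) {k : Fin ℓ}
    (hk : ¬ (Q.vertexSet ∩ (P k).vertexSet).Subsingleton) (hfirst : Q'.first = Q.first)
    (hsub : Q'.vertexSet ⊆ Q.vertexSet) (hlast : Q'.last ∈ (P k).interior)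
    (hmeet : Q'.vertexSet ∩ (P k).vertexSet = {Q'.last}) : IsLink P Q' := by
  obtain ⟨i, j, -, hind, hi, -, hnc⟩ := hQ
  refine ⟨i, k, ?_, Set.Subset.trans hsub hind, ?_, Or.inl ⟨hlast, hmeet⟩,
    fun m hm => hnc m (pathContains_of_vertexSet_subset (Set.Subset.trans hm.1 hsub))⟩
  · rintro rfl
    exact hk hi.subsingleton
  · rw [hfirst]
    exact hi.mono hsub (hfirst ▸ Q'.first_mem)

theorem IsLink.exists_ssubset [Finite V] (hG : IsBlockGraph G) (hQ : IsLink P Q)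
    (hE : ¬ Disjoint Q.edgeSet (famEdges G P)) :
    ∃ Q' : InducedPath G, Q'.vertexSet ⊂ Q.vertexSet ∧ IsLink P Q' := by
  obtain ⟨e, heQ, he⟩ := Set.not_disjoint_iff.mp hE
  obtain ⟨k, hek⟩ := Set.mem_iUnion.mp he
  induction e using Sym2.ind with
  | _ x y =>
  have hx : x ∈ Q.vertexSet ∩ (P k).vertexSet :=
    ⟨Q.walk.fst_mem_support_of_mem_edges heQ, (P k).walk.fst_mem_support_of_mem_edges hek⟩
  have hy : y ∈ Q.vertexSet ∩ (P k).vertexSet :=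
    ⟨Q.walk.snd_mem_support_of_mem_edges heQ, (P k).walk.snd_mem_support_of_mem_edges hek⟩
  have hxy : x ≠ y := (Q.walk.adj_of_mem_edges heQ).ne
  have hk : ¬ (Q.vertexSet ∩ (P k).vertexSet).Subsingleton := fun h => hxy (h hx hy)
  have hssub : ∀ {Q' : InducedPath G} {u : V}, Q'.vertexSet ⊆ Q.vertexSet →
      Q'.vertexSet ∩ (P k).vertexSet = {u} → Q'.vertexSet ⊂ Q.vertexSet :=
    fun hsub hmeet => ssubset_of_subset_of_ne hsub
      (fun heq => hk (heq ▸ hmeet ▸ Set.subsingleton_singleton))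
  obtain ⟨Q₁, Q₂, h₁f, h₂l, h₁, h₂, h₁m, h₂m, hne⟩ := Q.exists_prefix_suffix hx hy hxy
  by_cases hu₁ : Q₁.last ∈ (P k).interior
  · exact ⟨Q₁, hssub h₁ h₁m, hQ.prefix hk h₁f h₁ hu₁ h₁m⟩
  by_cases hu₂ : Q₂.first ∈ (P k).interior
  · refine ⟨Q₂.reverse, by simpa using hssub h₂ h₂m, hQ.reverse.prefix (by simpa using hk) h₂l
      (by simpa using h₂) hu₂ (by simpa using h₂m)⟩
  -- otherwise `Q` passes through both ends of `P k`, and so contains it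
  have hb₁ : Q₁.last ∈ (P k).boundary := by
    by_contra h
    exact hu₁ ⟨(h₁m.symm.subset rfl).2, h⟩
  have hb₂ : Q₂.first ∈ (P k).boundary := by
    by_contra h
    exact hu₂ ⟨(h₂m.symm.subset rfl).2, h⟩
  have hQ₁ : Q₁.last ∈ Q.vertexSet := h₁ Q₁.last_mem
  have hQ₂ : Q₂.first ∈ Q.vertexSet := h₂ Q₂.first_mem
  simp only [InducedPath.boundary, Set.mem_insert_iff, Set.mem_singleton_iff] at hb₁ hb₂
  exact (hQ.not_pathContains k (hG.pathContains (by grind) (by grind))).elim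

theorem IsBlockGraph.exists_isLink_disjoint [Finite V] (hG : IsBlockGraph G)
    (hQ : IsLink P Q) : ∃ Q' : InducedPath G, IsLink P Q' ∧ Disjoint Q'.edgeSet (famEdges G P) := by
  induction hn : Q.vertexSet.ncard using Nat.strong_induction_on generalizing Q with
  | _ n ih =>
  by_cases hE : Disjoint Q.edgeSet (famEdges G P)
  · exact ⟨Q, hQ, hE⟩
  obtain ⟨Q', hlt, hQ'⟩ := hQ.exists_ssubset hG hE
  exact ih _ (hn ▸ Set.ncard_lt_ncard hlt) hQ' rfl

theorem mk_notMem_famEdges (hdisj : PairwiseVertexDisjoint G P) {j : Fin ℓ} {u b : V}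
    (hu : u ∉ (P j).vertexSet) (hb : b ∈ (P j).vertexSet) : s(u, b) ∉ famEdges G P := by
  intro he
  obtain ⟨m, hm⟩ := Set.mem_iUnion.mp he
  obtain rfl : m = j := by
    by_contra hmj
    exact Set.disjoint_left.mp (hdisj m j hmj) ((P m).walk.snd_mem_support_of_mem_edges hm) hb
  exact hu ((P m).walk.fst_mem_support_of_mem_edges hm)

end Links

theorem blockGraph_fork_edgeDisjoint_general {V : Type*} [Fintype V]
    (G : SimpleGraph V) (hBG : IsBlockGraph G) (ℓ : ℕ) (P : Fin ℓ → InducedPath G)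
    (hdisj : PairwiseVertexDisjoint G P)
    (h : (∃ i j Q b c, IsInternalFork G P i j Q b c) ∨
      (∃ i j Q a b c d, IsDoubleFork G P i j Q a b c d)) :
    (∃ i j Q, IsInternalStrand G P i j Q ∧ Disjoint Q.edgeSet (famEdges G P)) ∨
    (∃ i j Q b c, IsInternalFork G P i j Q b c ∧
      Disjoint (Q.edgeSet ∪ {s(Q.last, b), s(Q.last, c)}) (famEdges G P)) ∨
    (∃ i j Q a b c d, IsDoubleFork G P i j Q a b c d ∧
      Disjoint (Q.edgeSet ∪ {s(Q.first, a), s(Q.first, b), s(Q.last, c), s(Q.last, d)})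
        (famEdges G P)) := by
  obtain ⟨Q₀, hQ₀⟩ : ∃ Q, IsLink P Q := by
    rcases h with ⟨i, j, Q, b, c, hF⟩ | ⟨i, j, Q, a, b, c, d, hD⟩
    exacts [⟨Q, hF.isLink⟩, ⟨Q, hD.isLink⟩]
  obtain ⟨Q, ⟨i, j, hij, hind, hi, hj, hnc⟩, hE⟩ := hBG.exists_isLink_disjoint hQ₀
  have hout : ∀ {k u}, Q.vertexSet ∩ (P k).vertexSet = ∅ → u ∈ Q.vertexSet →
      u ∉ (P k).vertexSet := fun h hu huk => Set.notMem_empty _ (h.subset ⟨hu, huk⟩)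
  simp only [Set.disjoint_union_left, Set.disjoint_insert_left, Set.disjoint_singleton_left]
  rcases hi with ⟨hi, hQi⟩ | ⟨hQi, a, b, ha, hb, hab, hva, hvb⟩ <;>
    rcases hj with ⟨hj, hQj⟩ | ⟨hQj, c, d, hc, hd, hcd, hvc, hvd⟩
  · exact Or.inl ⟨i, j, Q, ⟨hij, hind, hi, hj, hQi, hQj, hnc⟩, hE⟩
  · exact Or.inr <| Or.inl ⟨i, j, Q, c, d, ⟨hij, hind, hi, hQi, hQj, hc, hd, hcd, hvc, hvd, hnc⟩,
      hE, mk_notMem_famEdges hdisj (hout hQj Q.last_mem) hc,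
      mk_notMem_famEdges hdisj (hout hQj Q.last_mem) hd⟩
  · refine Or.inr <| Or.inl ⟨j, i, Q.reverse, a, b, ⟨hij.symm, by simpa using hind, hj,
      by simpa using hQj, by simpa using hQi, ha, hb, hab, hva, hvb, by simpa using hnc⟩,
      by simpa using hE, mk_notMem_famEdges hdisj (hout hQi Q.first_mem) ha,
      mk_notMem_famEdges hdisj (hout hQi Q.first_mem) hb⟩
  · exact Or.inr <| Or.inr ⟨i, j, Q, a, b, c, d,
      ⟨hij, hind, hQi, hQj, ha, hb, hab, hc, hd, hcd, hva, hvb, hvc, hvd, hnc⟩, hE,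
      mk_notMem_famEdges hdisj (hout hQi Q.first_mem) ha,
      mk_notMem_famEdges hdisj (hout hQi Q.first_mem) hb,
      mk_notMem_famEdges hdisj (hout hQj Q.last_mem) hc,
      mk_notMem_famEdges hdisj (hout hQj Q.last_mem) hd⟩

/-- **Theorem (Statement 17).** If `P_ind` contains an internal fork or a double fork,
then it contains an internal strand, internal fork, or double fork which is
edge-disjoint from the family `P`. -/
theorem blockGraph_fork_edgeDisjoint {V : Type*} [Fintype V] [DecidableEq V]
    (G : SimpleGraph V) (hBG : IsBlockGraph G) (ℓ : ℕ) (P : Fin ℓ → InducedPath G)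
    (hdisj : PairwiseVertexDisjoint G P)
    (h : (∃ i j Q b c, IsInternalFork G P i j Q b c) ∨
      (∃ i j Q a b c d, IsDoubleFork G P i j Q a b c d)) :
    (∃ i j Q, IsInternalStrand G P i j Q ∧ Disjoint Q.edgeSet (famEdges G P)) ∨
    (∃ i j Q b c, IsInternalFork G P i j Q b c ∧
      Disjoint (Q.edgeSet ∪ {s(Q.last, b), s(Q.last, c)}) (famEdges G P)) ∨
    (∃ i j Q a b c d, IsDoubleFork G P i j Q a b c d ∧
      Disjoint (Q.edgeSet ∪ {s(Q.first, a), s(Q.first, b), s(Q.last, c), s(Q.last, d)})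
        (famEdges G P)) :=
  blockGraph_fork_edgeDisjoint_general G hBG ℓ P hdisj h
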